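/- For any rooted phylogenetic tree T on a finite set X with n ≥ 2 elements and any 2-element subset {x,y} of X, the NEME coefficient satisfies 2/n² ≤ α^T_{x,y} ≤ 1/2. -/

import Mathlib

open Finset

/-- A rooted phylogenetic tree on `X`, encoded by its hierarchy of clusters:
the single child of the root corresponds to the cluster `univ`, leaves to singletons,
and the internal vertices to the clusters of the laminar family. -/
structure RPhyloTree (X : Type*) [Fintype X] [DecidableEq X] where
  clusters : Finset (Finset X)
  top_mem : (Finset.univ : Finset X) ∈ clusters
  singleton_mem : ∀ x : X, ({x} : Finset X) ∈ clusters
  laminar : ∀ C ∈ clusters, ∀ D ∈ clusters, C ⊆ D ∨ D ⊆ C ∨ Disjoint C D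

namespace RPhyloTree

variable {X : Type*} [Fintype X] [DecidableEq X]

/-- The children of the vertex (cluster) `C`: the maximal clusters strictly below `C`. -/
def children (t : RPhyloTree X) (C : Finset X) : Finset (Finset X) :=
  t.clusters.filter (fun A => A ⊂ C ∧ ∀ B ∈ t.clusters, A ⊂ B → ¬ B ⊂ C)

/-- The lowest common ancestor of `x` and `y`: the smallest cluster containing both. -/
def lca (t : RPhyloTree X) (x y : X) : Finset X :=
  (t.clusters.filter fun C => x ∈ C ∧ y ∈ C).inf'
    ⟨Finset.univ, by simp [t.top_mem]⟩ id

/-- The NEME coefficient `α^T_{x,y} = (deg(lca(x,y)) - 2) /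
(2 · Σ_{{u,u'} ⊆ ch(lca(x,y))} |C(u)|·|C(u')|)`.  Here the sum over ordered pairs of
distinct children (`offDiag`) equals twice the sum over unordered pairs, and the
degree of an internal vertex is the number of its children plus one. -/
noncomputable def coeff (t : RPhyloTree X) (x y : X) : ℝ :=
  (((t.children (t.lca x y)).card : ℝ) - 1) /
    (∑ p ∈ (t.children (t.lca x y)).offDiag, ((p.1.card : ℝ) * (p.2.card : ℝ)))

/-- The NEME score `σ_D(T) = Σ_{{x,y}} α^T_{x,y} · D(x,y)`; the sum over ordered pairs
of distinct elements is twice the sum over unordered pairs. -/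
noncomputable def score (t : RPhyloTree X) (D : X → X → ℝ) : ℝ :=
  (1 / 2) * ∑ p ∈ (Finset.univ : Finset X).offDiag, t.coeff p.1 p.2 * D p.1 p.2

/-- A rooted phylogenetic tree is binary if every internal vertex has exactly two children. -/
def IsBinary (t : RPhyloTree X) : Prop :=
  ∀ C ∈ t.clusters, 2 ≤ C.card → (t.children C).card = 2

end RPhyloTree

/-- A dissimilarity on `X`: symmetric and vanishing on the diagonal. -/
def IsDissimilarity {X : Type*} (D : X → X → ℝ) : Prop :=
  (∀ x y, D x y = D y x) ∧ ∀ x, D x x = 0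

namespace RPhyloTree

variable {X : Type*} [Fintype X] [DecidableEq X]

lemma lca_spec (t : RPhyloTree X) (x y : X) :
    t.lca x y ∈ t.clusters ∧ x ∈ t.lca x y ∧ y ∈ t.lca x y ∧
      ∀ C ∈ t.clusters, x ∈ C → y ∈ C → t.lca x y ⊆ C := by
  classical
  set F := t.clusters.filter fun C => x ∈ C ∧ y ∈ C with hF
  have hne : F.Nonempty := ⟨Finset.univ, by simp [hF, t.top_mem]⟩
  obtain ⟨m, hm, hmin⟩ := F.exists_minimal hne
  have hmem : ∀ C ∈ F, C ∈ t.clusters ∧ x ∈ C ∧ y ∈ C := by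
    intro C hC; simpa [hF] using Finset.mem_filter.mp hC
  have hle : ∀ C ∈ F, m ⊆ C := by
    intro C hC
    obtain ⟨hC1, hCx, hCy⟩ := hmem C hC
    obtain ⟨hm1, hmx, hmy⟩ := hmem m hm
    rcases t.laminar m hm1 C hC1 with h | h | h
    · exact h
    · rcases eq_or_ne C m with rfl | hne'
      · exact h
      · exact absurd (Finset.Subset.antisymm h (hmin hC h)) hne'
    · exact absurd (Finset.disjoint_left.mp h hmx) (by simp [hCx])
  have hlca : t.lca x y = m := by
    refine le_antisymm (Finset.inf'_le _ hm) (Finset.le_inf' _ _ fun C hC => hle C hC)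
  obtain ⟨hm1, hmx, hmy⟩ := hmem m hm
  exact ⟨hlca ▸ hm1, hlca ▸ hmx, hlca ▸ hmy, fun C hC hx hy =>
    hlca ▸ hle C (Finset.mem_filter.mpr ⟨hC, hx, hy⟩)⟩

/-- Every element of a cluster `L` with at least two elements lies in some child of `L`. -/
lemma exists_child_mem (t : RPhyloTree X) {L : Finset X} (hL : L ∈ t.clusters)
    (h2 : 2 ≤ L.card) {z : X} (hz : z ∈ L) : ∃ A ∈ t.children L, z ∈ A := by
  classical
  set G := t.clusters.filter fun B => z ∈ B ∧ B ⊂ L with hG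
  have hzG : ({z} : Finset X) ∈ G := by
    refine Finset.mem_filter.mpr ⟨t.singleton_mem z, by simp, ?_⟩
    refine Finset.ssubset_iff_subset_ne.mpr ⟨Finset.singleton_subset_iff.mpr hz, ?_⟩
    intro h
    rw [← h] at h2
    simp at h2
  obtain ⟨m, hm, hmax⟩ := G.exists_maximal ⟨_, hzG⟩
  obtain ⟨hm1, hmz, hmL⟩ : m ∈ t.clusters ∧ z ∈ m ∧ m ⊂ L := by
    simpa [hG] using Finset.mem_filter.mp hm
  refine ⟨m, Finset.mem_filter.mpr ⟨hm1, hmL, ?_⟩, hmz⟩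
  intro B hB hmB hBL
  exact (Finset.ssubset_iff_subset_ne.mp hmB).2
    (Finset.Subset.antisymm hmB.subset (hmax (Finset.mem_filter.mpr ⟨hB, hmB.subset hmz, hBL⟩) hmB.subset))

/-- Distinct children are disjoint. -/
lemma children_pairwise_disjoint (t : RPhyloTree X) (L : Finset X) :
    ∀ A ∈ t.children L, ∀ B ∈ t.children L, A ≠ B → Disjoint A B := by
  intro A hA B hB hne
  obtain ⟨hA1, hAL, hAmax⟩ : A ∈ t.clusters ∧ A ⊂ L ∧ _ := by
    simpa [children] using Finset.mem_filter.mp hA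
  obtain ⟨hB1, hBL, hBmax⟩ : B ∈ t.clusters ∧ B ⊂ L ∧ _ := by
    simpa [children] using Finset.mem_filter.mp hB
  rcases t.laminar A hA1 B hB1 with h | h | h
  · exact absurd hBL (hAmax B hB1 (Finset.ssubset_iff_subset_ne.mpr ⟨h, hne⟩))
  · exact absurd hAL (hBmax A hA1 (Finset.ssubset_iff_subset_ne.mpr ⟨h, hne.symm⟩))
  · exact h

/-- Children of a cluster with at least two elements are nonempty. -/
lemma children_nonempty (t : RPhyloTree X) {L : Finset X} (h2 : 2 ≤ L.card)
    {A : Finset X} (hA : A ∈ t.children L) : A.Nonempty := by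
  classical
  obtain ⟨hA1, hAL, hAmax⟩ : A ∈ t.clusters ∧ A ⊂ L ∧
      ∀ B ∈ t.clusters, A ⊂ B → ¬ B ⊂ L := by
    simpa [children] using Finset.mem_filter.mp hA
  rcases Finset.eq_empty_or_nonempty A with rfl | h
  · obtain ⟨z, hz⟩ := Finset.card_pos.mp (by omega : 0 < L.card)
    have hsub : ({z} : Finset X) ⊂ L := by
      refine Finset.ssubset_iff_subset_ne.mpr ⟨Finset.singleton_subset_iff.mpr hz, ?_⟩
      intro h
      rw [← h] at h2
      simp at h2
    exact absurd hsub (hAmax {z} (t.singleton_mem z) (by simp))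
  · exact h

lemma offdiag_sum {ι : Type*} [DecidableEq ι] (s : Finset ι) (f : ι → ℝ) :
    ∑ p ∈ s.offDiag, f p.1 * f p.2 = (∑ i ∈ s, f i)^2 - ∑ i ∈ s, (f i)^2 := by
  have h1 : (∑ i ∈ s, f i)^2 = ∑ p ∈ s ×ˢ s, f p.1 * f p.2 := by
    rw [sq, Finset.sum_mul_sum, Finset.sum_product]
  have h2 : ∑ p ∈ s ×ˢ s, f p.1 * f p.2
      = (∑ p ∈ (s ×ˢ s).filter (fun a => a.1 = a.2), f p.1 * f p.2)
      + ∑ p ∈ (s ×ˢ s).filter (fun a => ¬ a.1 = a.2), f p.1 * f p.2 :=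
    (Finset.sum_filter_add_sum_filter_not _ _ _).symm
  have h3 : ∑ p ∈ (s ×ˢ s).filter (fun a => a.1 = a.2), f p.1 * f p.2
      = ∑ i ∈ s, (f i)^2 := by
    refine Finset.sum_bij' (fun p _ => p.1) (fun i _ => (i, i)) ?_ ?_ ?_ ?_ ?_ <;>
      simp +contextual [sq]
  have h4 : s.offDiag = (s ×ˢ s).filter (fun a => ¬ a.1 = a.2) := by
    ext a; simp [and_assoc]
  rw [h4, h1, h2, h3]; ring

end RPhyloTree

/-- For any rooted phylogenetic tree `T` on a finite set `X` with `n ≥ 2` elements and any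
two distinct `x, y ∈ X`, the NEME coefficient satisfies `2/n² ≤ α^T_{x,y} ≤ 1/2`. -/
theorem stmt1 {X : Type*} [Fintype X] [DecidableEq X]
    (hn : 2 ≤ Fintype.card X) (t : RPhyloTree X) (x y : X) (hxy : x ≠ y) :
    2 / (Fintype.card X : ℝ) ^ 2 ≤ t.coeff x y ∧ t.coeff x y ≤ 1 / 2 := by
  classical
  obtain ⟨hL1, hxL, hyL, hLmin⟩ := t.lca_spec x y
  set L := t.lca x y with hLdef
  have hL2 : 2 ≤ L.card := by
    have : ({x, y} : Finset X) ⊆ L := by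
      intro z hz; simp only [Finset.mem_insert, Finset.mem_singleton] at hz
      rcases hz with rfl | rfl <;> assumption
    calc 2 = ({x, y} : Finset X).card := (Finset.card_pair hxy).symm
    _ ≤ L.card := Finset.card_le_card this
  set ch := t.children L with hch
  -- x and y lie in distinct children
  obtain ⟨A, hA, hxA⟩ := t.exists_child_mem hL1 hL2 hxL
  obtain ⟨B, hB, hyB⟩ := t.exists_child_mem hL1 hL2 hyL
  have hAB : A ≠ B := by
    rintro rfl
    obtain ⟨hA1, hAL, -⟩ : A ∈ t.clusters ∧ A ⊂ L ∧ _ := by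
      simpa [RPhyloTree.children] using Finset.mem_filter.mp hA
    exact absurd (hLmin A hA1 hxA hyB) (by
      intro h
      exact hAL.not_subset h)
  have hk2 : 2 ≤ ch.card := by
    have : ({A, B} : Finset (Finset X)) ⊆ ch := by
      intro z hz; simp only [Finset.mem_insert, Finset.mem_singleton] at hz
      rcases hz with rfl | rfl <;> assumption
    calc 2 = ({A, B} : Finset (Finset X)).card := (Finset.card_pair hAB).symm
    _ ≤ ch.card := Finset.card_le_card this
  -- notation for the real quantities
  set k : ℝ := (ch.card : ℝ) with hk
  set S : ℝ := ∑ A ∈ ch, ((A.card : ℕ) : ℝ) with hS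
  set Q : ℝ := ∑ A ∈ ch, (((A.card : ℕ) : ℝ))^2 with hQ
  set n : ℝ := (Fintype.card X : ℝ) with hn'
  have hkR : (2 : ℝ) ≤ k := by rw [hk]; exact_mod_cast hk2
  have hnR : (2 : ℝ) ≤ n := by rw [hn']; exact_mod_cast hn
  have hone : ∀ A ∈ ch, (1 : ℝ) ≤ (A.card : ℝ) := by
    intro A hA
    have := t.children_nonempty hL2 hA
    exact_mod_cast Finset.card_pos.mpr this
  -- sum of the sizes of the children is at most n
  have hSn : S ≤ n := by
    have hdisj : ∀ A ∈ ch, ∀ B ∈ ch, A ≠ B → Disjoint (id A) (id B) :=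
      fun A hA B hB h => t.children_pairwise_disjoint L A hA B hB h
    have h1 : ∑ A ∈ ch, A.card = (ch.biUnion id).card :=
      (Finset.card_biUnion hdisj).symm
    have h2 : (ch.biUnion id).card ≤ Fintype.card X := Finset.card_le_univ _
    have : ∑ A ∈ ch, A.card ≤ Fintype.card X := h1 ▸ h2
    calc S = ((∑ A ∈ ch, A.card : ℕ) : ℝ) := by rw [hS, Nat.cast_sum]
    _ ≤ n := by rw [hn']; exact_mod_cast this
  have hS0 : 0 ≤ S := Finset.sum_nonneg fun i _ => by positivity
  -- Cauchy–Schwarz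
  have hCS : S^2 ≤ k * Q := by
    rw [hS, hQ, hk]
    exact sq_sum_le_card_mul_sum_sq (s := ch) (f := fun A => ((A.card : ℕ) : ℝ))
  -- the denominator
  set D : ℝ := ∑ p ∈ ch.offDiag, ((p.1.card : ℝ) * (p.2.card : ℝ)) with hD
  have hDval : D = S^2 - Q := by
    rw [hD, hS, hQ]
    exact RPhyloTree.offdiag_sum ch (fun A => ((A.card : ℕ) : ℝ))
  have hDlow : k * (k - 1) ≤ D := by
    have h1 : ∀ p ∈ ch.offDiag, (1 : ℝ) ≤ (p.1.card : ℝ) * (p.2.card : ℝ) := by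
      intro p hp
      obtain ⟨h1, h2, -⟩ := Finset.mem_offDiag.mp hp
      nlinarith [hone p.1 h1, hone p.2 h2]
    have h2 : (ch.offDiag.card : ℝ) * 1 ≤ D := by
      have := Finset.card_nsmul_le_sum ch.offDiag
        (fun p => ((p.1.card : ℝ) * (p.2.card : ℝ))) 1 h1
      simpa [nsmul_eq_mul] using this
    have h3 : (ch.offDiag.card : ℝ) = k * k - k := by
      rw [Finset.offDiag_card]
      have : ch.card ≤ ch.card * ch.card := Nat.le_mul_of_pos_left _ (by omega)
      push_cast [Nat.cast_sub this]
      rw [hk]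
    nlinarith [h2, h3]
  have hDpos : 0 < D := by nlinarith
  have hcoeff : t.coeff x y = (k - 1) / D := rfl
  constructor
  · -- lower bound
    rw [hcoeff, div_le_div_iff₀ (by positivity) hDpos]
    -- 2 * D ≤ n^2 * (k-1), using k * D = k*S^2 - k*Q ≤ (k-1) * S^2
    have key : k * D ≤ (k - 1) * S^2 := by
      rw [hDval]; nlinarith
    nlinarith [mul_nonneg (by linarith : (0:ℝ) ≤ k - 1)
      (by nlinarith : (0:ℝ) ≤ k * n^2 - 2 * S^2), sq_nonneg S]
  · -- upper bound
    rw [hcoeff, div_le_div_iff₀ hDpos (by norm_num)]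
    nlinarith
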